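/- For every x ∈ X, the quantity F(x) = sup_u (T⁻u(x) + α[0] − u(x)), where the supremum is over all critical sub-solutions u, is finite and equals T⁻φ_x(x) + α[0]. Moreover, if x is not isolated, then F(x) = lim_{y→x, y≠x} φ_x(y). -/

import Mathlib

open Metric Set Filter Topology

/-- `X` is a `B`-length space at scale `K`. -/
def IsBLengthSpaceAtScale (X : Type*) [MetricSpace X] (B K : ℝ) : Prop :=
  ∀ x y : X, ∃ (n : ℕ) (p : ℕ → X), p 0 = x ∧ p n = y ∧
    (∀ i < n, dist (p i) (p (i + 1)) ≤ K) ∧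
    ∑ i ∈ Finset.range n, dist (p i) (p (i + 1)) ≤ B * dist x y

/-- Uniform superlinearity of the cost `c`. -/
def UniformlySuperlinear {X : Type*} [MetricSpace X] (c : X → X → ℝ) : Prop :=
  ∀ k : ℝ, 0 ≤ k → ∃ C : ℝ, ∀ x y : X, k * dist x y - C ≤ c x y

/-- Uniform boundedness of the cost `c`. -/
def UniformlyBounded {X : Type*} [MetricSpace X] (c : X → X → ℝ) : Prop :=
  ∀ R : ℝ, ∃ A : ℝ, ∀ x y : X, dist x y ≤ R → c x y ≤ A

/-- `u` is `α`-dominated: `u y - u x ≤ c x y + α` for all `x y`. -/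
def Dominated {X : Type*} (c : X → X → ℝ) (α : ℝ) (u : X → ℝ) : Prop :=
  ∀ x y : X, u y - u x ≤ c x y + α

/-- Negative Lax-Oleinik semigroup. -/
noncomputable def Tm {X : Type*} (c : X → X → ℝ) (u : X → ℝ) (x : X) : ℝ :=
  ⨅ y, (u y + c y x)

/-- Positive Lax-Oleinik semigroup. -/
noncomputable def Tp {X : Type*} (c : X → X → ℝ) (u : X → ℝ) (x : X) : ℝ :=
  ⨆ y, (u y - c x y)

/-- The critical constant `α[0]`: the smallest `α` for which `α`-dominated functions exist. -/
noncomputable def critValue {X : Type*} (c : X → X → ℝ) : ℝ :=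
  sInf {α : ℝ | ∃ u : X → ℝ, Dominated c α u}

/-- The Mañé potential `φ(x,y) = sup_u (u y - u x)`, sup over critical sub-solutions. -/
noncomputable def mane {X : Type*} (c : X → X → ℝ) (x y : X) : ℝ :=
  sSup {r : ℝ | ∃ u : X → ℝ, Dominated c (critValue c) u ∧ r = u y - u x}

/-- A bi-infinite sequence is `(u,c,α)`-calibrated if all its finite subchains of
consecutive terms are calibrated. -/
def IsCalibrated {X : Type*} (c : X → X → ℝ) (α : ℝ) (u : X → ℝ) (x : ℤ → X) : Prop :=
  ∀ (m : ℤ) (k : ℕ), u (x (m + k)) =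
    u (x m) + (∑ i ∈ Finset.range k, c (x (m + i)) (x (m + i + 1))) + k * α

/-- The projected Aubry set of a critical sub-solution `u`. -/
def projAubry {X : Type*} (c : X → X → ℝ) (u : X → ℝ) : Set X :=
  {p : X | ∃ x : ℤ → X, IsCalibrated c (critValue c) u x ∧ x 0 = p}

/-- The set `Â_u` of pairs of consecutive terms of calibrated bi-infinite sequences. -/
def aubryPairs {X : Type*} (c : X → X → ℝ) (u : X → ℝ) : Set (X × X) :=
  {q : X × X | ∃ (x : ℤ → X) (n : ℤ),
    IsCalibrated c (critValue c) u x ∧ x n = q.1 ∧ x (n + 1) = q.2}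

/-- The projected Aubry set `A = ∩_u A_u`, intersection over all critical sub-solutions. -/
def projAubrySet {X : Type*} (c : X → X → ℝ) : Set X :=
  {p : X | ∀ u : X → ℝ, Dominated c (critValue c) u → p ∈ projAubry c u}

/-- The Aubry pair set `Â = ∩_u Â_u`, intersection over all critical sub-solutions. -/
def aubryPairsSet {X : Type*} (c : X → X → ℝ) : Set (X × X) :=
  {q : X × X | ∀ u : X → ℝ, Dominated c (critValue c) u → q ∈ aubryPairs c u}

/-- `c_n(x,y)`: infimum of total cost over chains of length `n` from `x` to `y`. -/
noncomputable def cChain {X : Type*} (c : X → X → ℝ) (n : ℕ) (x y : X) : ℝ :=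
  sInf {r : ℝ | ∃ p : ℕ → X, p 0 = x ∧ p n = y ∧
    r = ∑ i ∈ Finset.range n, c (p i) (p (i + 1))}

/-- `φ_n(x,y) = inf_{k ≥ n} (c_k(x,y) + k·α)`. -/
noncomputable def phiN {X : Type*} (c : X → X → ℝ) (α : ℝ) (n : ℕ) (x y : X) : ℝ :=
  sInf {r : ℝ | ∃ k : ℕ, n ≤ k ∧ r = cChain c k x y + k * α}

/-- The Peierls barrier, with values in the extended reals. -/
noncomputable def peierls {X : Type*} (c : X → X → ℝ) (α : ℝ) (x y : X) : EReal :=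
  Filter.liminf (fun n : ℕ => ((cChain c n x y + n * α : ℝ) : EReal)) Filter.atTop

/-- Negative Lax-Oleinik semigroup on extended-real-valued functions. -/
noncomputable def eTm {X : Type*} (c : X → X → ℝ) (u : X → EReal) (x : X) : EReal :=
  ⨅ y, (u y + (c y x : EReal))

/-- Positive Lax-Oleinik semigroup on extended-real-valued functions. -/
noncomputable def eTp {X : Type*} (c : X → X → ℝ) (u : X → EReal) (x : X) : EReal :=
  ⨆ y, (u y - (c x y : EReal))


/-!
Every critical sub-solution `u` satisfies `u z - u x ≤ φ_x z`, so `T⁻u(x) - u(x) ≤ T⁻φ_x(x)`,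
while `φ_x` is itself a critical sub-solution vanishing at `x`: the supremum is attained at `φ_x`.
Away from `x`, `φ_x` is a fixed point of `T⁻ + α[0]`, so the limit along `y → x` is the value at
`x` of `T⁻φ_x`, which is continuous: in a `B`-length space dominated functions are coarsely
Lipschitz, so by superlinearity of `c` the infimum defining `T⁻φ_x(y)` for `y` near `x` only
involves a fixed compact ball, on which `c` is uniformly continuous.
-/

section

variable {X : Type*} {c : X → X → ℝ} {α : ℝ} {u : X → ℝ}

lemma le_tm {x : X} {r : ℝ} (h : ∀ z, r ≤ u z + c z x) : r ≤ Tm c u x :=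
  have : Nonempty X := ⟨x⟩
  le_ciInf h

namespace Dominated

lemma mono {β : ℝ} (hu : Dominated c α u) (hαβ : α ≤ β) : Dominated c β u :=
  fun a b => (hu a b).trans (by linarith)

lemma bddBelow_range (hu : Dominated c α u) (x : X) :
    BddBelow (range fun y => u y + c y x) :=
  ⟨u x - α, by rintro _ ⟨y, rfl⟩; linarith [hu y x]⟩

lemma tm_le (hu : Dominated c α u) (x y : X) : Tm c u x ≤ u y + c y x :=
  ciInf_le (hu.bddBelow_range x) y

lemma sub_le_tm (hu : Dominated c α u) (x : X) : u x - α ≤ Tm c u x :=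
  le_tm fun y => by linarith [hu y x]

lemma update_tm [DecidableEq X] (hu : Dominated c α u) (y : X) :
    Dominated c α (Function.update u y (Tm c u y + α)) := by
  intro a b
  by_cases ha : a = y <;> by_cases hb : b = y
  · simpa [ha, hb] using hu y y
  · simp only [ha, Function.update_self, Function.update_of_ne hb]
    linarith [hu y b, hu.sub_le_tm y]
  · simp only [hb, Function.update_self, Function.update_of_ne ha]
    linarith [hu.tm_le y a]
  · simpa [Function.update_of_ne ha, Function.update_of_ne hb] using hu a b

end Dominated

lemma exists_dominated_of_forall_pos (h : ∀ ε > 0, ∃ u : X → ℝ, Dominated c (α + ε) u)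
    (x : X) : ∃ u : X → ℝ, Dominated c α u ∧ u x = 0 := by
  choose v hv using fun n : ℕ => h (1 / (n + 1)) Nat.one_div_pos_of_nat
  set w : ℕ → X → ℝ := fun n y => v n y - v n x
  have hw : ∀ n a b, w n b - w n a ≤ c a b + α + 1 / (n + 1) := fun n a b => by
    simp only [w]; linarith [hv n a b]
  have hwx : ∀ n, w n x = 0 := fun n => sub_self _
  have hn1 : ∀ n : ℕ, 1 / ((n : ℝ) + 1) ≤ 1 := fun n =>
    div_le_one_of_le₀ (by linarith [n.cast_nonneg (α := ℝ)]) (by positivity)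
  have hw_le : ∀ n y, w n y ≤ c x y + α + 1 := fun n y => by
    linarith [hw n x y, hwx n, hn1 n]
  have hw_ge : ∀ n y, -(c y x + α + 1) ≤ w n y := fun n y => by
    linarith [hw n y x, hwx n, hn1 n]
  have hbdd : ∀ y, IsBoundedUnder (· ≤ ·) atTop fun n => w n y := fun y =>
    isBoundedUnder_of ⟨_, fun n => hw_le n y⟩
  have hcobdd : ∀ y, IsCoboundedUnder (· ≤ ·) atTop fun n => w n y := fun y =>
    isCoboundedUnder_le_of_le atTop fun n => hw_ge n y
  refine ⟨fun y => limsup (fun n => w n y) atTop, fun a b => ?_, by simp [hwx]⟩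
  refine sub_le_iff_le_add.2 (le_of_forall_pos_le_add fun ε hε => ?_)
  obtain ⟨N, hN⟩ := exists_nat_one_div_lt hε
  have hev : ∀ᶠ n in atTop, w n b ≤ w n a + (c a b + α + ε) := by
    filter_upwards [eventually_ge_atTop N] with n hn
    have : 1 / ((n : ℝ) + 1) ≤ 1 / (N + 1) := Nat.one_div_le_one_div hn
    linarith [hw n a b]
  calc limsup (fun n => w n b) atTop
      ≤ limsup (fun n => w n a + (c a b + α + ε)) atTop :=
        limsup_le_limsup hev (hcobdd b)
          (isBoundedUnder_of ⟨_, fun n => add_le_add_left (hw_le n a) _⟩)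
    _ = _ := by rw [limsup_add_const _ _ _ (hbdd a) (hcobdd a)]; ring

lemma le_mane (hu : Dominated c (critValue c) u) (x y : X) : u y - u x ≤ mane c x y :=
  le_csSup ⟨c x y + critValue c, by rintro _ ⟨v, hv, rfl⟩; exact hv x y⟩ ⟨u, hu, rfl⟩

section Critical

variable [MetricSpace X]

lemma exists_dominated_critValue_add (hsl : UniformlySuperlinear c) {ε : ℝ} (hε : 0 < ε) :
    ∃ u : X → ℝ, Dominated c (critValue c + ε) u := by
  obtain ⟨C, hC⟩ := hsl 0 le_rfl
  have hne : {α : ℝ | ∃ u : X → ℝ, Dominated c α u}.Nonempty :=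
    ⟨C, fun _ => 0, fun a b => by linarith [hC a b]⟩
  obtain ⟨β, ⟨u, hu⟩, hβ⟩ := exists_lt_of_csInf_lt hne (lt_add_of_pos_right (critValue c) hε)
  exact ⟨u, hu.mono hβ.le⟩

lemma exists_dominated_critValue (hsl : UniformlySuperlinear c) (x : X) :
    ∃ u : X → ℝ, Dominated c (critValue c) u ∧ u x = 0 :=
  exists_dominated_of_forall_pos (fun _ hε => exists_dominated_critValue_add hsl hε) x

lemma mane_le (hsl : UniformlySuperlinear c) {x y : X} {r : ℝ}
    (h : ∀ u, Dominated c (critValue c) u → u y - u x ≤ r) : mane c x y ≤ r :=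
  have ⟨u, hu, _⟩ := exists_dominated_critValue hsl x
  csSup_le ⟨_, u, hu, rfl⟩ (by rintro _ ⟨v, hv, rfl⟩; exact h v hv)

lemma mane_self (hsl : UniformlySuperlinear c) (x : X) : mane c x x = 0 := by
  obtain ⟨u, hu, _⟩ := exists_dominated_critValue hsl x
  exact le_antisymm (mane_le hsl fun v _ => (sub_self _).le) (by simpa using le_mane hu x x)

lemma dominated_mane (hsl : UniformlySuperlinear c) (x : X) :
    Dominated c (critValue c) (mane c x) := fun a b =>
  sub_le_iff_le_add.2 <| mane_le hsl fun u hu => by linarith [hu a b, le_mane hu x a]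

/-- Otherwise raising `mane c x` at `y` by `Dominated.update_tm` would give a critical
sub-solution `u` with `u y - u x > mane c x y`. -/
lemma mane_eq_tm_add (hsl : UniformlySuperlinear c) {x y : X} (hyx : y ≠ x) :
    mane c x y = Tm c (mane c x) y + critValue c := by
  classical
  have hφ := dominated_mane hsl x
  refine le_antisymm (by linarith [hφ.sub_le_tm y]) ?_
  have := le_mane (hφ.update_tm y) x y
  rwa [Function.update_self, Function.update_of_ne hyx.symm, mane_self hsl, sub_zero] at this

lemma isGreatest_tm_add_sub (hsl : UniformlySuperlinear c) (x : X) :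
    IsGreatest {r : ℝ | ∃ u : X → ℝ, Dominated c (critValue c) u ∧
      r = Tm c u x + critValue c - u x} (Tm c (mane c x) x + critValue c) := by
  refine ⟨⟨mane c x, dominated_mane hsl x, by rw [mane_self hsl, sub_zero]⟩, ?_⟩
  rintro _ ⟨u, hu, rfl⟩
  have : Tm c u x - u x ≤ Tm c (mane c x) x :=
    le_tm fun z => by linarith [hu.tm_le x z, le_mane hu x z]
  linarith

end Critical

lemma exists_le_lt_succ_of_le_of_lt {β : Type*} [LinearOrder β] {f : ℕ → β} {t : β} {n : ℕ}
    (h0 : f 0 ≤ t) (hn : t < f n) : ∃ i < n, f i ≤ t ∧ t < f (i + 1) := by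
  induction n with
  | zero => exact absurd hn h0.not_gt
  | succ n ih =>
    by_cases h : t < f n
    · obtain ⟨i, hi, hfi⟩ := ih h
      exact ⟨i, hi.trans n.lt_succ_self, hfi⟩
    · exact ⟨n, n.lt_succ_self, not_lt.1 h, hn⟩

/-- Choose `i` with `s i ≤ s n - K < s (i + 1)` for the partial lengths `s`: the two jumps
`p i → p (i + 1) → p n` cost `2 M` and shorten the chain by more than `K`. -/
lemma sub_le_of_chain [PseudoMetricSpace X] {K M : ℝ} (hK : 0 < K)
    (hjump : ∀ x y : X, dist x y ≤ K → u y - u x ≤ M)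
    {p : ℕ → X} {n : ℕ} (hstep : ∀ i < n, dist (p i) (p (i + 1)) ≤ K) :
    u (p n) - u (p 0) ≤ M * (1 + 2 * (∑ i ∈ Finset.range n, dist (p i) (p (i + 1))) / K) := by
  set s : ℕ → ℝ := fun j => ∑ i ∈ Finset.range j, dist (p i) (p (i + 1))
  have hM : 0 ≤ M := by simpa using hjump (p 0) (p 0) (by simpa using hK.le)
  induction n using Nat.strong_induction_on with
  | _ n ih =>
  by_cases hsK : s n ≤ K
  · calc u (p n) - u (p 0) ≤ M := hjump _ _ ((dist_le_range_sum_dist p n).trans hsK)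
      _ ≤ M * (1 + 2 * s n / K) :=
        le_mul_of_one_le_right hM (le_add_of_nonneg_right (by positivity))
  obtain ⟨i, hin, hi, hi1⟩ :=
    exists_le_lt_succ_of_le_of_lt (f := s) (t := s n - K)
      (by simpa [s] using (not_le.1 hsK).le) (by linarith)
  have hhead := ih i hin fun j hj => hstep j (hj.trans hin)
  have hmid := hjump _ _ (hstep i hin)
  have htail : u (p n) - u (p (i + 1)) ≤ M := by
    refine hjump _ _ ((dist_le_Ico_sum_dist p hin).trans ?_)
    have := Finset.sum_range_add_sum_Ico (fun j => dist (p j) (p (j + 1))) hin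
    simp only [s] at hi1
    linarith
  have hshorter : M * (2 * s i / K) ≤ M * (2 * s n / K) - 2 * M := by
    calc M * (2 * s i / K) ≤ M * (2 * (s n - K) / K) := by gcongr
      _ = M * (2 * s n / K) - 2 * M := by field_simp
  simp only [s] at hhead hshorter ⊢
  linarith

lemma IsBLengthSpaceAtScale.sub_le [MetricSpace X] {B K M : ℝ}
    (hlen : IsBLengthSpaceAtScale X B K) (hK : 0 < K)
    (hjump : ∀ x y : X, dist x y ≤ K → u y - u x ≤ M) (a b : X) :
    u b - u a ≤ M * (1 + 2 * B * dist a b / K) := by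
  obtain ⟨n, p, rfl, rfl, hstep, hlength⟩ := hlen a b
  have hM : 0 ≤ M := by simpa using hjump (p 0) (p 0) (by simpa using hK.le)
  calc u (p n) - u (p 0)
      ≤ M * (1 + 2 * (∑ i ∈ Finset.range n, dist (p i) (p (i + 1))) / K) :=
        sub_le_of_chain hK hjump hstep
    _ ≤ M * (1 + 2 * B * dist (p 0) (p n) / K) := by rw [mul_assoc 2 B]; gcongr

lemma Dominated.upperSemicontinuous_tm [TopologicalSpace X]
    (hcont : Continuous fun q : X × X => c q.1 q.2) (hu : Dominated c α u) :
    UpperSemicontinuous (Tm c u) :=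
  upperSemicontinuous_ciInf hu.bddBelow_range fun y =>
    (continuous_const.add (hcont.comp (Continuous.prodMk_right y))).upperSemicontinuous

/-- Near `x`, superlinearity of `c` beats the linear lower bound on `u`, so the infimum defining
`Tm c u y` only sees points `z` of a compact ball, on which `c z y → c z x` uniformly. -/
lemma Dominated.lowerSemicontinuousAt_tm [MetricSpace X] [ProperSpace X]
    (hcont : Continuous fun q : X × X => c q.1 q.2) (hsl : UniformlySuperlinear c)
    (hu : Dominated c α u) {x : X} {L C₀ : ℝ} (hL : 0 ≤ L)
    (hlow : ∀ z, u x - u z ≤ L * dist z x + C₀) : LowerSemicontinuousAt (Tm c u) x := by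
  intro r hr
  set ε := Tm c u x - r
  obtain ⟨C, hC⟩ := hsl (L + 1) (by linarith)
  set R := c x x + L + C₀ + C
  obtain ⟨v, hv, hvc⟩ := (isCompact_closedBall x (R + 1)).mem_uniformity_of_prod
    (f := fun y z => c z y) (s := univ) (hcont.comp continuous_swap).continuousOn (mem_univ x)
    (dist_mem_uniformity (half_pos (sub_pos.2 hr)))
  rw [nhdsWithin_univ] at hv
  filter_upwards [hv, ball_mem_nhds x one_pos] with y hyv hy1
  suffices Tm c u x - ε / 2 ≤ Tm c u y by linarith
  refine le_tm fun z => ?_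
  by_cases hz : dist z x ≤ R + 1
  · have hc : dist (c z y) (c z x) < ε / 2 := hvc y hyv z (mem_closedBall.2 hz)
    rw [Real.dist_eq, abs_sub_lt_iff] at hc
    linarith [hu.tm_le x z]
  · have hzy : dist z x ≤ dist z y + 1 :=
      (dist_triangle z y x).trans (by linarith [mem_ball.1 hy1])
    have := mul_le_mul_of_nonneg_left hzy hL
    linarith [hC z y, hlow z, hu.tm_le x x]

lemma Dominated.continuous_tm [MetricSpace X] [ProperSpace X] {B K : ℝ} (hB : 0 ≤ B)
    (hK : 0 < K) (hlen : IsBLengthSpaceAtScale X B K)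
    (hcont : Continuous fun q : X × X => c q.1 q.2) (hsl : UniformlySuperlinear c)
    (hub : UniformlyBounded c) (hu : Dominated c α u) : Continuous (Tm c u) := by
  obtain ⟨A, hA⟩ := hub K
  have hjump : ∀ x y : X, dist x y ≤ K → u y - u x ≤ A + α := fun x y h => by
    linarith [hu x y, hA x y h]
  refine continuous_iff_continuousAt.2 fun x => continuousAt_iff_lower_upperSemicontinuousAt.2
    ⟨hu.lowerSemicontinuousAt_tm hcont hsl (L := 2 * B * (A + α) / K) (C₀ := A + α) ?_
      fun z => ?_,
      hu.upperSemicontinuous_tm hcont x⟩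
  · have : 0 ≤ A + α := by simpa using hjump x x (by simpa using hK.le)
    positivity
  · have := hlen.sub_le hK hjump z x
    field_simp at this ⊢
    linarith

end

theorem jump_of_mane_potential_general {X : Type*} [MetricSpace X] [ProperSpace X]
    {B K : ℝ} (hB : 1 ≤ B) (hK : 0 < K) (hlen : IsBLengthSpaceAtScale X B K)
    {c : X → X → ℝ} (hcont : Continuous fun q : X × X => c q.1 q.2)
    (hsl : UniformlySuperlinear c) (hub : UniformlyBounded c) (x : X) :
    BddAbove {r : ℝ | ∃ u : X → ℝ, Dominated c (critValue c) u ∧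
      r = Tm c u x + critValue c - u x} ∧
    sSup {r : ℝ | ∃ u : X → ℝ, Dominated c (critValue c) u ∧
      r = Tm c u x + critValue c - u x} = Tm c (mane c x) x + critValue c ∧
    ((𝓝[≠] x).NeBot →
      Tendsto (mane c x) (𝓝[≠] x)
        (𝓝 (sSup {r : ℝ | ∃ u : X → ℝ, Dominated c (critValue c) u ∧
          r = Tm c u x + critValue c - u x}))) := by
  have hmax := isGreatest_tm_add_sub hsl x
  refine ⟨hmax.bddAbove, hmax.csSup_eq, fun _ => ?_⟩
  have hT : Continuous fun y => Tm c (mane c x) y + critValue c :=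
    ((dominated_mane hsl x).continuous_tm (by linarith) hK hlen hcont hsl hub).add_const _
  rw [hmax.csSup_eq]
  refine (hT.continuousAt.tendsto.mono_left nhdsWithin_le_nhds).congr' ?_
  filter_upwards [self_mem_nhdsWithin] with y hy using (mane_eq_tm_add hsl hy).symm

theorem jump_of_mane_potential {X : Type*} [MetricSpace X] [Nonempty X] [ProperSpace X]
    {B K : ℝ} (hB : 1 ≤ B) (hK : 0 < K) (hlen : IsBLengthSpaceAtScale X B K)
    {c : X → X → ℝ} (hcont : Continuous fun q : X × X => c q.1 q.2)
    (hsl : UniformlySuperlinear c) (hub : UniformlyBounded c) (x : X) :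
    BddAbove {r : ℝ | ∃ u : X → ℝ, Dominated c (critValue c) u ∧
      r = Tm c u x + critValue c - u x} ∧
    sSup {r : ℝ | ∃ u : X → ℝ, Dominated c (critValue c) u ∧
      r = Tm c u x + critValue c - u x} = Tm c (mane c x) x + critValue c ∧
    ((𝓝[≠] x).NeBot →
      Tendsto (mane c x) (𝓝[≠] x)
        (𝓝 (sSup {r : ℝ | ∃ u : X → ℝ, Dominated c (critValue c) u ∧
          r = Tm c u x + critValue c - u x}))) :=
  jump_of_mane_potential_general hB hK hlen hcont hsl hub x
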